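/- Let π_K : ℂ² → ℂ³ be defined by π_K(u₁,u₃) = ((u₃ − u₁³/3)², 2u₁u₃ + u₁⁴/3, −u₁²). Then for all u, v ∈ ℂ², π_K(u) = π_K(v) if and only if v = u or v = −u. In other words, the nonempty fibres of π_K are exactly the two-element orbits {u, −u} (one-element when u = 0), so π_K induces an embedding of ℂ²/± into ℂ³. -/

import Mathlib

/-- The embedding of `ℂ²/±` into `ℂ³` induced by the rational limit of the Kummer
surface. -/
noncomputable def piK : ℂ × ℂ → ℂ × ℂ × ℂ :=
  fun u => ((u.2 - u.1^3/3)^2, 2*u.1*u.2 + u.1^4/3, -u.1^2)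

/-!
In the coordinates `x = u₁`, `y = σ₀(u) = u₃ − u₁³/3` one has `π_K = (y², 2xy + x⁴, −x²)`, so
`π_K` is the quadratic Veronese map `(x, y) ↦ (y², xy, x²)` followed by the invertible change of
coordinates `(a, b, c) ↦ (a, 2b + c², −c)`. The Veronese map identifies exactly the points `±p`,
and `u ↦ (x, y)` is an odd bijection.
-/

section Veronese

variable {R : Type*} [CommRing R]

def veronese (p : R × R) : R × R × R := (p.2 ^ 2, p.1 * p.2, p.1 ^ 2)

theorem veronese_neg (p : R × R) : veronese (-p) = veronese p := by
  simp only [veronese, Prod.fst_neg, Prod.snd_neg, neg_sq, neg_mul_neg]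

theorem veronese_eq_veronese_iff [NoZeroDivisors R] {p q : R × R} :
    veronese p = veronese q ↔ q = p ∨ q = -p := by
  refine ⟨fun h => ?_, by rintro (rfl | rfl) <;> simp only [veronese_neg]⟩
  obtain ⟨x, y⟩ := p
  obtain ⟨x', y'⟩ := q
  simp only [veronese, Prod.mk.injEq] at h
  obtain ⟨hy, hxy, hx⟩ := h
  simp only [Prod.mk.injEq, Prod.neg_mk]
  by_cases hx0 : x = 0
  · subst hx0
    obtain rfl : x' = 0 := sq_eq_zero_iff.mp (by rw [← hx, zero_pow two_ne_zero])
    rcases eq_or_eq_neg_of_sq_eq_sq _ _ hy.symm with rfl | rfl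
    · exact .inl ⟨rfl, rfl⟩
    · exact .inr ⟨neg_zero.symm, rfl⟩
  · -- once `x ≠ 0`, the sign relating `x'` to `x` is forced on `y'` by `xy = x'y'`
    rcases eq_or_eq_neg_of_sq_eq_sq _ _ hx.symm with rfl | rfl
    · exact .inl ⟨rfl, (mul_left_cancel₀ hx0 hxy).symm⟩
    · refine .inr ⟨rfl, mul_left_cancel₀ hx0 ?_⟩
      linear_combination hxy

end Veronese

variable {K : Type*} [Field K]

def sigmaCoords (u : K × K) : K × K := (u.1, u.2 - u.1 ^ 3 / 3)

theorem sigmaCoords_neg (u : K × K) : sigmaCoords (-u) = -sigmaCoords u := by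
  simp only [sigmaCoords, Prod.fst_neg, Prod.snd_neg, Prod.neg_mk, Prod.mk.injEq, true_and]
  ring

theorem sigmaCoords_injective : Function.Injective (sigmaCoords : K × K → K × K) := by
  rintro ⟨a, b⟩ ⟨c, d⟩ h
  simp only [sigmaCoords, Prod.mk.injEq] at h
  obtain ⟨rfl, h⟩ := h
  rw [sub_left_inj.mp h]

def kummerCoords (w : K × K × K) : K × K × K := (w.1, 2 * w.2.1 + w.2.2 ^ 2, -w.2.2)

theorem kummerCoords_injective [NeZero (2 : K)] :
    Function.Injective (kummerCoords : K × K × K → K × K × K) := by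
  rintro ⟨a, b, c⟩ ⟨a', b', c'⟩ h
  simp only [kummerCoords, Prod.mk.injEq, neg_inj] at h
  obtain ⟨rfl, h, rfl⟩ := h
  rw [mul_left_cancel₀ two_ne_zero (add_right_cancel h)]

theorem piK_eq_kummerCoords_veronese_sigmaCoords (u : ℂ × ℂ) :
    piK u = kummerCoords (veronese (sigmaCoords u)) := by
  simp only [piK, kummerCoords, veronese, sigmaCoords, Prod.mk.injEq, true_and, and_true]
  ring

/-- The nonempty fibres of `π_K` are exactly the orbits `{u, −u}` of the involution
`u ↦ −u`, so `π_K` induces an embedding of `ℂ²/±` into `ℂ³`. -/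
theorem piK_fibres : ∀ u v : ℂ × ℂ, piK u = piK v ↔ (v = u ∨ v = -u) := by
  intro u v
  simp only [piK_eq_kummerCoords_veronese_sigmaCoords, kummerCoords_injective.eq_iff,
    veronese_eq_veronese_iff, ← sigmaCoords_neg, sigmaCoords_injective.eq_iff]
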